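/- The (p,q) torus knot parametrization t ↦ ((2 + cos(q t)) cos(p t), (2 + cos(q t)) sin(p t), sin(q t)) on [0, 2π) is injective when gcd(p,q) = 1 and p, q ≥ 1. -/

import Mathlib

/-! The first two coordinates of `torusKnot p q t` are the polar coordinates `(2 + cos (q t), p t)`,
and the third is `sin (q t)`; so a coincidence `torusKnot p q s = torusKnot p q t` forces
`p s ≡ p t` and `q s ≡ q t` modulo `2π`.
The order of `s - t` in `ℝ / 2πℤ` then divides the coprime numbers `p` and `q`, so `s ≡ t`. -/

open Real

noncomputable def torusKnot (p q : ℕ) (t : ℝ) : ℝ × ℝ × ℝ :=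
  ((2 + Real.cos (q * t)) * Real.cos (p * t),
   ((2 + Real.cos (q * t)) * Real.sin (p * t),
    Real.sin (q * t)))

theorem eq_zero_of_nsmul_eq_zero_of_coprime {G : Type*} [AddMonoid G] {p q : ℕ} {x : G}
    (hpq : p.Coprime q) (hp : p • x = 0) (hq : q • x = 0) : x = 0 :=
  AddMonoid.addOrderOf_eq_one_iff.mp <| Nat.eq_one_of_dvd_coprimes hpq
    (addOrderOf_dvd_of_nsmul_eq_zero hp) (addOrderOf_dvd_of_nsmul_eq_zero hq)

theorem eq_and_angle_eq_of_polar_eq {r₁ r₂ a b : ℝ} (hr₁ : 0 < r₁) (hr₂ : 0 ≤ r₂)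
    (hc : r₁ * cos a = r₂ * cos b) (hs : r₁ * sin a = r₂ * sin b) :
    r₁ = r₂ ∧ (a : Angle) = b := by
  have hsq : r₁ ^ 2 = r₂ ^ 2 := by
    linear_combination r₂ ^ 2 * sin_sq_add_cos_sq b - r₁ ^ 2 * sin_sq_add_cos_sq a
      + (r₁ * sin a + r₂ * sin b) * hs + (r₁ * cos a + r₂ * cos b) * hc
  have hr : r₁ = r₂ := (sq_eq_sq₀ hr₁.le hr₂).mp hsq
  subst hr
  exact ⟨rfl, Angle.cos_sin_inj (mul_left_cancel₀ hr₁.ne' hc) (mul_left_cancel₀ hr₁.ne' hs)⟩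

theorem nsmul_coe_eq_of_torusKnot_eq {p q : ℕ} {s t : ℝ} (h : torusKnot p q s = torusKnot p q t) :
    p • (s : Angle) = p • (t : Angle) ∧ q • (s : Angle) = q • (t : Angle) := by
  simp only [torusKnot, Prod.mk.injEq] at h
  obtain ⟨hx, hy, hz⟩ := h
  have two_add_cos_pos (θ : ℝ) : 0 < 2 + cos θ := by linarith [neg_one_le_cos θ]
  obtain ⟨hr, hp⟩ :=
    eq_and_angle_eq_of_polar_eq (two_add_cos_pos _) (two_add_cos_pos _).le hx hy
  have hq : ((q * s : ℝ) : Angle) = (q * t : ℝ) := Angle.cos_sin_inj (by linarith) hz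
  simpa only [← nsmul_eq_mul, Angle.coe_nsmul] using And.intro hp hq

theorem torusKnot_injOn_general (p q : ℕ) (hpq : Nat.Coprime p q) :
    Set.InjOn (torusKnot p q) (Set.Ico 0 (2 * π)) := by
  rintro s hs t ht h
  obtain ⟨hp, hq⟩ := nsmul_coe_eq_of_torusKnot_eq h
  have hst : (s : Angle) - t = 0 := eq_zero_of_nsmul_eq_zero_of_coprime hpq
    (by rw [nsmul_sub, hp, sub_self]) (by rw [nsmul_sub, hq, sub_self])
  have : Fact (0 < 2 * π) := ⟨two_pi_pos⟩
  rw [← zero_add (2 * π)] at hs ht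
  exact (AddCircle.coe_eq_coe_iff_of_mem_Ico hs ht).mp (sub_eq_zero.mp hst)

/-- For coprime positive integers `p, q`, the torus knot parametrization is injective on
`[0, 2π)`. -/
theorem torusKnot_injOn (p q : ℕ) (hp : 1 ≤ p) (hq : 1 ≤ q) (hpq : Nat.Coprime p q) :
    Set.InjOn (torusKnot p q) (Set.Ico 0 (2 * π)) :=
  torusKnot_injOn_general p q hpq
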